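/- Let A be the 2×2 complex matrix with all entries 1 and D = diag(1, -1). Then w(A) = 2 while w(DA) = w(D⁻¹A) = 1, so the inequality w(A)² ≤ w(DA)·w(D⁻¹A) fails; here w denotes the numerical radius of a matrix acting on ℂ². -/

import Mathlib

/-!
For a unit vector `x ∈ ℂ²`, `|⟨Ax, x⟩| = |x₀ + x₁|²` and `|⟨DAx, x⟩| = |x₀ + x₁| |x₀ - x₁|`,
while the parallelogram law gives `|x₀ + x₁|² + |x₀ - x₁|² = 2`. Hence `w(A) ≤ 2` and, by AM-GM,
`w(DA) ≤ 1`, with equality at `(1, 1)/√2` and `(1, 0)` respectively. Since `D⁻¹ = D`, this gives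
`w(A)² = 4 > 1 = w(DA) w(D⁻¹A)`.
-/

open scoped Matrix ComplexConjugate

/-- The numerical radius of an `n × n` complex matrix, viewed as an operator on `ℂⁿ`
with the Euclidean norm. -/
noncomputable def matNumRad {n : ℕ} (M : Matrix (Fin n) (Fin n) ℂ) : ℝ :=
  sSup {r : ℝ | ∃ x : EuclideanSpace ℂ (Fin n), ‖x‖ = 1 ∧
    r = ‖(inner ℂ (Matrix.toEuclideanCLM (𝕜 := ℂ) M x) x : ℂ)‖}

theorem matNumRad_eq_of_forall_le {n : ℕ} {M : Matrix (Fin n) (Fin n) ℂ} {c : ℝ}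
    (hle : ∀ x : EuclideanSpace ℂ (Fin n), ‖x‖ = 1 →
      ‖(inner ℂ (Matrix.toEuclideanCLM (𝕜 := ℂ) M x) x : ℂ)‖ ≤ c)
    {x₀ : EuclideanSpace ℂ (Fin n)} (hx₀ : ‖x₀‖ = 1)
    (hc : ‖(inner ℂ (Matrix.toEuclideanCLM (𝕜 := ℂ) M x₀) x₀ : ℂ)‖ = c) :
    matNumRad M = c :=
  IsGreatest.csSup_eq ⟨⟨x₀, hx₀, hc.symm⟩, by rintro r ⟨x, hx, rfl⟩; exact hle x hx⟩

theorem inner_toEuclideanCLM_fin_two (M : Matrix (Fin 2) (Fin 2) ℂ)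
    (x : EuclideanSpace ℂ (Fin 2)) :
    (inner ℂ (Matrix.toEuclideanCLM (𝕜 := ℂ) M x) x : ℂ) =
      conj (M 0 0 * x 0 + M 0 1 * x 1) * x 0 + conj (M 1 0 * x 0 + M 1 1 * x 1) * x 1 := by
  have h (i : Fin 2) : Matrix.toEuclideanCLM (𝕜 := ℂ) M x i = (M *ᵥ WithLp.ofLp x) i :=
    congrFun (Matrix.ofLp_toEuclideanCLM M x) i
  simp [PiLp.inner_apply, Fin.sum_univ_two, h, Matrix.mulVec, dotProduct]
  ring

theorem norm_add_sq_add_norm_sub_sq_of_norm_eq_one {x : EuclideanSpace ℂ (Fin 2)}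
    (hx : ‖x‖ = 1) : ‖x 0 + x 1‖ ^ 2 + ‖x 0 - x 1‖ ^ 2 = 2 := by
  have h := EuclideanSpace.norm_sq_eq x
  rw [hx, Fin.sum_univ_two] at h
  linarith [parallelogram_law_with_norm ℂ (x 0) (x 1)]

theorem norm_inner_toEuclideanCLM_fin_two_ones (x : EuclideanSpace ℂ (Fin 2)) :
    ‖(inner ℂ (Matrix.toEuclideanCLM (𝕜 := ℂ) !![1, 1; 1, 1] x) x : ℂ)‖ =
      ‖x 0 + x 1‖ ^ 2 := by
  have h : (inner ℂ (Matrix.toEuclideanCLM (𝕜 := ℂ) !![1, 1; 1, 1] x) x : ℂ) =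
      conj (x 0 + x 1) * (x 0 + x 1) := by
    rw [inner_toEuclideanCLM_fin_two]; simp; ring
  rw [h, norm_mul, Complex.norm_conj, sq]

theorem norm_inner_toEuclideanCLM_fin_two_ones_neg_ones (x : EuclideanSpace ℂ (Fin 2)) :
    ‖(inner ℂ (Matrix.toEuclideanCLM (𝕜 := ℂ) !![1, 1; -1, -1] x) x : ℂ)‖ =
      ‖x 0 + x 1‖ * ‖x 0 - x 1‖ := by
  have h : (inner ℂ (Matrix.toEuclideanCLM (𝕜 := ℂ) !![1, 1; -1, -1] x) x : ℂ) =
      conj (x 0 + x 1) * (x 0 - x 1) := by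
    rw [inner_toEuclideanCLM_fin_two]; simp; ring
  rw [h, norm_mul, Complex.norm_conj]

theorem matNumRad_fin_two_ones : matNumRad (!![1, 1; 1, 1] : Matrix (Fin 2) (Fin 2) ℂ) = 2 := by
  refine matNumRad_eq_of_forall_le (fun x hx => ?_) (x₀ := !₂[(√2)⁻¹, (√2)⁻¹])
    (by simp [EuclideanSpace.norm_eq]; norm_num) ?_
  · rw [norm_inner_toEuclideanCLM_fin_two_ones]
    linarith [norm_add_sq_add_norm_sub_sq_of_norm_eq_one hx, sq_nonneg ‖x 0 - x 1‖]
  · rw [norm_inner_toEuclideanCLM_fin_two_ones]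
    simp only [Matrix.cons_val_zero, Matrix.cons_val_one]
    rw [← two_mul, norm_mul, norm_inv, mul_pow, inv_pow, Complex.norm_two, Complex.norm_real,
      Real.norm_eq_abs, sq_abs, Real.sq_sqrt zero_le_two]
    norm_num

theorem matNumRad_fin_two_ones_neg_ones :
    matNumRad (!![1, 1; -1, -1] : Matrix (Fin 2) (Fin 2) ℂ) = 1 := by
  refine matNumRad_eq_of_forall_le (fun x hx => ?_) (x₀ := EuclideanSpace.single 0 1)
    (by simp) (by rw [norm_inner_toEuclideanCLM_fin_two_ones_neg_ones]; simp)
  rw [norm_inner_toEuclideanCLM_fin_two_ones_neg_ones]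
  nlinarith [norm_add_sq_add_norm_sub_sq_of_norm_eq_one hx,
    two_mul_le_add_sq ‖x 0 + x 1‖ ‖x 0 - x 1‖]

theorem inv_fin_two_diag_one_neg_one :
    (!![1, 0; 0, -1] : Matrix (Fin 2) (Fin 2) ℂ)⁻¹ = !![1, 0; 0, -1] := by
  rw [Matrix.inv_eq_left_inv]
  simp [← Matrix.one_fin_two]

theorem fin_two_diag_one_neg_one_mul_ones :
    (!![1, 0; 0, -1] : Matrix (Fin 2) (Fin 2) ℂ) * !![1, 1; 1, 1] = !![1, 1; -1, -1] := by
  simp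

theorem numRad_counterexample :
    matNumRad (!![1, 1; 1, 1] : Matrix (Fin 2) (Fin 2) ℂ) = 2 ∧
    matNumRad ((!![1, 0; 0, -1] : Matrix (Fin 2) (Fin 2) ℂ) * !![1, 1; 1, 1]) = 1 ∧
    matNumRad ((!![1, 0; 0, -1] : Matrix (Fin 2) (Fin 2) ℂ)⁻¹ * !![1, 1; 1, 1]) = 1 ∧
    ¬ (matNumRad (!![1, 1; 1, 1] : Matrix (Fin 2) (Fin 2) ℂ) ^ 2 ≤
        matNumRad ((!![1, 0; 0, -1] : Matrix (Fin 2) (Fin 2) ℂ) * !![1, 1; 1, 1]) *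
        matNumRad ((!![1, 0; 0, -1] : Matrix (Fin 2) (Fin 2) ℂ)⁻¹ * !![1, 1; 1, 1])) := by
  rw [inv_fin_two_diag_one_neg_one, fin_two_diag_one_neg_one_mul_ones, matNumRad_fin_two_ones,
    matNumRad_fin_two_ones_neg_ones]
  norm_num
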